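/- (Proposition of Section 4.1, chart version: the push-up property implies causal plainness.) Let U, g, T be as in the context, with g Lorentzian and T a time orientation. Suppose the push-up property holds on U: for every p ∈ U, if q ∈ J⁺_g(p,U) and r ∈ I⁺_g(q,U) then r ∈ I⁺_g(p,U). Then for every p ∈ U, the topological interior of J⁺_g(p,U) is contained in I⁺_g(p,U); in particular the bubbling set B⁺(p,U) = int(J⁺_g(p,U)) \ closure(I⁺_g(p,U)) is empty. -/

import Mathlib

open MeasureTheory Set Filter

noncomputable section

/-- `ℝ^{n+1}` with the Euclidean norm. -/
abbrev Esp (n : ℕ) : Type := EuclideanSpace ℝ (Fin (n + 1))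

/-- The standard basis vector `e_μ` of `ℝ^{n+1}`. -/
def ee (n : ℕ) (μ : Fin (n + 1)) : Esp n := EuclideanSpace.single μ (1 : ℝ)

/-- The quadratic form `η^α(X) = -((1-α)/(1+α))·X₀² + ∑_{i=1}^n Xᵢ²`. -/
def etaQ (n : ℕ) (α : ℝ) (X : Esp n) : ℝ :=
  -((1 - α) / (1 + α)) * X 0 ^ 2 + ∑ i ∈ Finset.univ.erase (0 : Fin (n + 1)), X i ^ 2

/-- The standard Minkowski bilinear form `η(v,w) = -v₀w₀ + ∑_{i=1}^n vᵢwᵢ`. -/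
def etaB (n : ℕ) (v w : Esp n) : ℝ :=
  -(v 0 * w 0) + ∑ i ∈ Finset.univ.erase (0 : Fin (n + 1)), v i * w i

/-- A curve is locally Lipschitz on `s` if it is Lipschitz on every compact subset of `s`. -/
def LocLipOn (n : ℕ) (γ : ℝ → Esp n) (s : Set ℝ) : Prop :=
  ∀ K, K ⊆ s → IsCompact K → ∃ C : NNReal, LipschitzOnWith C γ K

/-- An `η^α`-causal curve on `s`: locally Lipschitz, and for a.e. `t ∈ s` it is differentiable
with `η^α(γ'(t)) ≤ 0` and `(γ'(t))₀ > 0`. -/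
def EtaCausalOn (n : ℕ) (α : ℝ) (γ : ℝ → Esp n) (s : Set ℝ) : Prop :=
  LocLipOn n γ s ∧
    ∀ᵐ t ∂(volume.restrict s),
      DifferentiableAt ℝ γ t ∧ etaQ n α (deriv γ t) ≤ 0 ∧ 0 < deriv γ t 0

/-- An `η^α`-timelike curve on `s`: locally Lipschitz, and there is `δ > 0` such that for a.e.
`t ∈ s` it is differentiable with `η^α(γ'(t)) < -δ` and `(γ'(t))₀ > 0`. -/
def EtaTimelikeOn (n : ℕ) (α : ℝ) (γ : ℝ → Esp n) (s : Set ℝ) : Prop :=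
  LocLipOn n γ s ∧
    ∃ δ : ℝ, 0 < δ ∧
      ∀ᵐ t ∂(volume.restrict s),
        DifferentiableAt ℝ γ t ∧ etaQ n α (deriv γ t) < -δ ∧ 0 < deriv γ t 0

/-- `I⁺_{η^α}(p, U)`: endpoints of `η^α`-timelike curves in `U` starting at `p`. -/
def EtaIplus (n : ℕ) (α : ℝ) (p : Esp n) (U : Set (Esp n)) : Set (Esp n) :=
  {q | ∃ a b : ℝ, ∃ γ : ℝ → Esp n, a < b ∧ EtaTimelikeOn n α γ (Icc a b) ∧
        MapsTo γ (Icc a b) U ∧ γ a = p ∧ γ b = q}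

/-- The Euclidean cone `C⁺_ε(p,U)`. -/
def ConeP (n : ℕ) (ε : ℝ) (p : Esp n) (U : Set (Esp n)) : Set (Esp n) :=
  {q | q ∈ U ∧ q ≠ p ∧ Real.sqrt ((1 + ε) / 2) < (q - p) 0 / ‖q - p‖}

/-- `g` assigns to each point a symmetric bilinear form with continuous components on `U`. -/
def IsSymmCont (n : ℕ) (g : Esp n → Esp n →ₗ[ℝ] Esp n →ₗ[ℝ] ℝ) (U : Set (Esp n)) : Prop :=
  (∀ x ∈ U, ∀ v w : Esp n, g x v w = g x w v) ∧
    ∀ μ ν : Fin (n + 1), ContinuousOn (fun x => g x (ee n μ) (ee n ν)) U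

/-- `g` is Lorentzian on `U`: at each point it is linearly equivalent to the Minkowski form. -/
def IsLorentzian (n : ℕ) (g : Esp n → Esp n →ₗ[ℝ] Esp n →ₗ[ℝ] ℝ) (U : Set (Esp n)) : Prop :=
  ∀ x ∈ U, ∃ L : Esp n ≃ₗ[ℝ] Esp n, ∀ v w : Esp n, g x (L v) (L w) = etaB n v w

/-- `T` is a time orientation for `g` on `U`. -/
def IsTimeOrientation (n : ℕ) (g : Esp n → Esp n →ₗ[ℝ] Esp n →ₗ[ℝ] ℝ)
    (T : Esp n → Esp n) (U : Set (Esp n)) : Prop :=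
  ContinuousOn T U ∧ ∀ x ∈ U, g x (T x) (T x) < 0

/-- `X` is future-directed causal at `x` (w.r.t. the time orientation `T`). -/
def FDCausal (n : ℕ) (g : Esp n → Esp n →ₗ[ℝ] Esp n →ₗ[ℝ] ℝ) (T : Esp n → Esp n)
    (x X : Esp n) : Prop :=
  X ≠ 0 ∧ g x X X ≤ 0 ∧ g x (T x) X < 0

/-- A `g`-causal curve on `s` with values in `U`. -/
def GCausalOn (n : ℕ) (g : Esp n → Esp n →ₗ[ℝ] Esp n →ₗ[ℝ] ℝ) (T : Esp n → Esp n)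
    (U : Set (Esp n)) (γ : ℝ → Esp n) (s : Set ℝ) : Prop :=
  LocLipOn n γ s ∧ MapsTo γ s U ∧
    ∀ᵐ t ∂(volume.restrict s),
      DifferentiableAt ℝ γ t ∧ FDCausal n g T (γ t) (deriv γ t)

/-- A `g`-timelike curve on `s` with values in `U`. -/
def GTimelikeOn (n : ℕ) (g : Esp n → Esp n →ₗ[ℝ] Esp n →ₗ[ℝ] ℝ) (T : Esp n → Esp n)
    (U : Set (Esp n)) (γ : ℝ → Esp n) (s : Set ℝ) : Prop :=
  LocLipOn n γ s ∧ MapsTo γ s U ∧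
    ∃ δ : ℝ, 0 < δ ∧
      ∀ᵐ t ∂(volume.restrict s),
        DifferentiableAt ℝ γ t ∧
          g (γ t) (deriv γ t) (deriv γ t) < -δ ∧ g (γ t) (T (γ t)) (deriv γ t) < 0

/-- `I⁺_g(p,U)`: endpoints of `g`-timelike curves in `U` starting at `p`. -/
def GIplus (n : ℕ) (g : Esp n → Esp n →ₗ[ℝ] Esp n →ₗ[ℝ] ℝ) (T : Esp n → Esp n)
    (p : Esp n) (U : Set (Esp n)) : Set (Esp n) :=
  {q | ∃ a b : ℝ, ∃ γ : ℝ → Esp n, a < b ∧ GTimelikeOn n g T U γ (Icc a b) ∧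
        γ a = p ∧ γ b = q}

/-- `J⁺_g(p,U)`: `p` together with endpoints of `g`-causal curves in `U` starting at `p`. -/
def GJplus (n : ℕ) (g : Esp n → Esp n →ₗ[ℝ] Esp n →ₗ[ℝ] ℝ) (T : Esp n → Esp n)
    (p : Esp n) (U : Set (Esp n)) : Set (Esp n) :=
  insert p
    {q | ∃ a b : ℝ, ∃ γ : ℝ → Esp n, a < b ∧ GCausalOn n g T U γ (Icc a b) ∧
          γ a = p ∧ γ b = q}

/-- Lorentzian length `L_g(γ)` of a curve on `[a,b]`. -/
def Lg (n : ℕ) (g : Esp n → Esp n →ₗ[ℝ] Esp n →ₗ[ℝ] ℝ) (γ : ℝ → Esp n) (a b : ℝ) : ℝ :=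
  ∫ t in a..b, Real.sqrt (max 0 (-(g (γ t) (deriv γ t) (deriv γ t))))

/-- Euclidean length of a curve on `[a,b]`. -/
def Leuc (n : ℕ) (γ : ℝ → Esp n) (a b : ℝ) : ℝ :=
  ∫ t in a..b, ‖deriv γ t‖

/-- `η^α`-Lorentzian length of a curve on `[a,b]`. -/
def Leta (n : ℕ) (α : ℝ) (γ : ℝ → Esp n) (a b : ℝ) : ℝ :=
  ∫ t in a..b, Real.sqrt (max 0 (-(etaQ n α (deriv γ t))))

lemma sum_single_eq (n : ℕ) (w : Esp n) : ∑ μ, w μ • ee n μ = w := by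
  ext j
  simp [ee, Pi.single_apply, Finset.sum_ite_eq, mul_comm]

lemma g_expand (n : ℕ) (g : Esp n → Esp n →ₗ[ℝ] Esp n →ₗ[ℝ] ℝ) (x v w : Esp n) :
    g x v w = ∑ μ, ∑ ν, v μ * w ν * g x (ee n μ) (ee n ν) := by
  conv_lhs => rw [← sum_single_eq n v, ← sum_single_eq n w]
  simp only [map_sum, LinearMap.coe_sum, Finset.sum_apply]
  rw [Finset.sum_comm]
  refine Finset.sum_congr rfl fun μ _ => Finset.sum_congr rfl fun ν _ => ?_
  simp only [_root_.map_smul, LinearMap.smul_apply, smul_eq_mul]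
  ring

lemma g_contOn (n : ℕ) (g : Esp n → Esp n →ₗ[ℝ] Esp n →ₗ[ℝ] ℝ) (U : Set (Esp n))
    (hg : IsSymmCont n g U) (T : Esp n → Esp n) (hT : ContinuousOn T U) (w : Esp n) :
    ContinuousOn (fun x => g x (T x) w) U := by
  have : (fun x => g x (T x) w) =
      fun x => ∑ μ, ∑ ν, (T x) μ * w ν * g x (ee n μ) (ee n ν) := by
    funext x; exact g_expand n g x (T x) w
  rw [this]
  refine continuousOn_finset_sum _ fun μ _ => continuousOn_finset_sum _ fun ν _ => ?_
  refine ContinuousOn.mul (ContinuousOn.mul ?_ continuousOn_const) (hg.2 μ ν)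
  exact (EuclideanSpace.proj μ).continuous.comp_continuousOn hT

/-- Section 4.1, chart version: the push-up property implies causal plainness. -/
theorem stmt_17 (n : ℕ) (hn : 1 ≤ n) (U : Set (Esp n)) (hU : IsOpen U)
    (g : Esp n → Esp n →ₗ[ℝ] Esp n →ₗ[ℝ] ℝ) (hg : IsSymmCont n g U)
    (hlor : IsLorentzian n g U)
    (T : Esp n → Esp n) (hT : IsTimeOrientation n g T U)
    (hpush : ∀ p ∈ U, ∀ q r : Esp n, q ∈ GJplus n g T p U →
        r ∈ GIplus n g T q U → r ∈ GIplus n g T p U)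
    (p : Esp n) (hp : p ∈ U) :
    interior (GJplus n g T p U) ⊆ GIplus n g T p U ∧
    interior (GJplus n g T p U) \ closure (GIplus n g T p U) = ∅ := by
  have hJU : GJplus n g T p U ⊆ U := by
    rintro r (rfl | ⟨a, b, γ, hab, ⟨_, hmaps, _⟩, _, rfl⟩)
    · exact hp
    · exact hmaps (right_mem_Icc.mpr hab.le)
  have main : interior (GJplus n g T p U) ⊆ GIplus n g T p U := by
    intro r hr
    have hrU : r ∈ U := hJU (interior_subset hr)
    set v : Esp n := T r with hv_def
    have hvneg : g r v v < 0 := hT.2 r hrU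
    have hvne : v ≠ 0 := by
      intro h
      rw [h] at hvneg; simp at hvneg
    have hvnorm : (0 : ℝ) < ‖v‖ := norm_pos_iff.mpr hvne
    set δ : ℝ := -(g r v v) / 2 with hδ_def
    have hδpos : 0 < δ := by rw [hδ_def]; linarith
    -- continuity facts at r
    have hcont1 : ContinuousAt (fun x => g x v v) r :=
      (g_contOn n g U hg (fun _ => v) continuousOn_const v).continuousAt (hU.mem_nhds hrU)
    have hcont2 : ContinuousAt (fun x => g x (T x) v) r :=
      (g_contOn n g U hg T hT.1 v).continuousAt (hU.mem_nhds hrU)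
    have h1 : ∀ᶠ x in nhds r, g x v v < -δ := by
      apply hcont1.eventually_lt continuousAt_const
      rw [hδ_def]; linarith
    have h2 : ∀ᶠ x in nhds r, g x (T x) v < 0 := by
      apply hcont2.eventually_lt continuousAt_const
      exact hvneg
    have h3 : interior (GJplus n g T p U) ∈ nhds r := isOpen_interior.mem_nhds hr
    have h4 : U ∈ nhds r := hU.mem_nhds hrU
    obtain ⟨ε, hεpos, hball⟩ := Metric.mem_nhds_iff.mp
      (Filter.inter_mem (Filter.inter_mem h1 h2) (Filter.inter_mem h3 h4))
    set c : ℝ := ε / (2 * ‖v‖) with hc_def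
    have hcpos : 0 < c := by positivity
    set γ : ℝ → Esp n := fun t => r + t • v with hγ_def
    have hmem : ∀ t ∈ Icc (-c) 0, γ t ∈ Metric.ball r ε := by
      intro t ht
      have h1 : |t| ≤ c := abs_le.mpr ⟨ht.1, le_trans ht.2 hcpos.le⟩
      have : ‖γ t - r‖ = |t| * ‖v‖ := by
        simp [hγ_def, norm_smul, Real.norm_eq_abs]
      rw [Metric.mem_ball, dist_eq_norm, this]
      calc |t| * ‖v‖ ≤ c * ‖v‖ := by nlinarith
        _ = ε / 2 := by rw [hc_def]; field_simp
        _ < ε := by linarith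
    have hderiv : ∀ t : ℝ, HasDerivAt γ v t := fun t => by
      simpa [hγ_def] using (((hasDerivAt_id t).smul_const v).const_add r)
    have hderiv' : ∀ t : ℝ, deriv γ t = v := fun t => (hderiv t).deriv
    -- q is in the ball, hence in J⁺
    set q : Esp n := γ (-c) with hq_def
    have hqJ : q ∈ GJplus n g T p U :=
      interior_subset ((hball (hmem (-c) ⟨le_refl _, by linarith⟩)).2.1)
    -- r ∈ I⁺(q, U)
    have hrI : r ∈ GIplus n g T q U := by
      refine ⟨-c, 0, γ, by linarith, ⟨?_, ?_, δ, hδpos, ?_⟩, rfl, by simp [hγ_def]⟩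
      · intro K _ _
        refine ⟨‖v‖₊, LipschitzWith.lipschitzOnWith ?_⟩
        refine LipschitzWith.of_dist_le_mul fun s t => ?_
        have : γ s - γ t = (s - t) • v := by
          simp only [hγ_def]; module
        rw [coe_nnnorm]
        calc dist (γ s) (γ t) = ‖(s - t) • v‖ := by rw [dist_eq_norm, this]
          _ = |s - t| * ‖v‖ := by rw [norm_smul, Real.norm_eq_abs]
          _ = ‖v‖ * dist s t := by rw [Real.dist_eq]; ring
          _ ≤ ‖v‖ * dist s t := le_refl _
      · intro t ht
        exact (hball (hmem t ht)).2.2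
      · rw [ae_restrict_iff' measurableSet_Icc]
        refine Filter.Eventually.of_forall fun t ht => ?_
        have hb := hball (hmem t ht)
        refine ⟨(hderiv t).differentiableAt, ?_, ?_⟩
        · rw [hderiv' t]; exact hb.1.1
        · rw [hderiv' t]; exact hb.1.2
    exact hpush p hp q r hqJ hrI
  exact ⟨main, Set.diff_eq_empty.mpr (main.trans subset_closure)⟩
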